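/- Variance bound for the empirical mass defect of a feasible Gibbs density: Let p : 𝒳^m → ℝ be measurable with |1 − p| ≤ M (ν_1⊗⋯⊗ν_m)-almost everywhere for some M > 0, and suppose p satisfies the marginal feasibility constraints: for every j ∈ {1,…,m} and ν_j-a.e. x_j, ∫ p(x_1,…,x_m) d(⊗_{i≠j}ν_i) = 1. Then E[ ( ∫ (1 − p) d(ν̂_1^N ⊗ ⋯ ⊗ ν̂_m^N) )² ] ≤ M² · m / N, where the expectation is over the random samples. -/

import Mathlib

open MeasureTheory ProbabilityTheory Filter Topology
open scoped ENNReal NNReal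

noncomputable section

/-- `ℝ^d` with the Euclidean norm. -/
abbrev Euc (d : ℕ) : Type := EuclideanSpace ℝ (Fin d)

/-- The multimarginal cost `c_α(x₁,…,x_m) = ∑_{i<j} ‖α_i x_i − α_j x_j‖²`. -/
def costα {m d : ℕ} (α : Fin m → ℝ) (x : Fin m → Euc d) : ℝ :=
  ∑ i : Fin m, ∑ j : Fin m, if i < j then ‖α i • x i - α j • x j‖ ^ 2 else 0

open scoped Classical in
/-- Kullback–Leibler divergence, valued in `ℝ≥0∞` (it is nonnegative for probability
measures): `KL(P‖Q) = ∫ log (dP/dQ) dP` when `P ≪ Q` and the integrand is integrable,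
and `∞` otherwise. -/
def KLdiv {E : Type*} [MeasurableSpace E] (P Q : Measure E) : ℝ≥0∞ :=
  if P ≪ Q ∧ Integrable (fun x => Real.log ((P.rnDeriv Q x).toReal)) P
  then ENNReal.ofReal (∫ x, Real.log ((P.rnDeriv Q x).toReal) ∂P) else ⊤

/-- The entropic multimarginal transport functional
`π ↦ ∫ c_α dπ + ε KL(π ‖ ν₁⊗⋯⊗ν_m)`, valued in `ℝ≥0∞`. -/
def entCost {m d : ℕ} (α : Fin m → ℝ) (ε : ℝ) (ν : Fin m → Measure (Euc d))
    (π : Measure (Fin m → Euc d)) : ℝ≥0∞ :=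
  ∫⁻ x, ENNReal.ofReal (costα α x) ∂π + ENNReal.ofReal ε * KLdiv π (Measure.pi ν)

/-- Membership in the coupling set `Π(ν₁,…,ν_m)`: a probability measure on `𝒳^m`
whose `j`-th marginal is `ν j` for every `j`. -/
def IsCoupling {m d : ℕ} (ν : Fin m → Measure (Euc d))
    (π : Measure (Fin m → Euc d)) : Prop :=
  IsProbabilityMeasure π ∧ ∀ j, π.map (fun x => x j) = ν j

end

/-- The empirical measure `N⁻¹ ∑_{k} δ_{x k}` of a point cloud `x`. -/
noncomputable def empMeas {E : Type*} [MeasurableSpace E] {N : ℕ} (x : Fin N → E) :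
    Measure E :=
  (N : ℝ≥0∞)⁻¹ • ∑ k : Fin N, Measure.dirac (x k)

/-!
With `g = 1 - p` and `Y k = (X j (k j))_j` for a multi-index `k : Fin m → Fin N`, the mass defect
is `N⁻ᵐ ∑ₖ g (Y k)`, so its second moment is `N⁻²ᵐ ∑_{k,k'} E[g (Y k) g (Y k')]`. Each `Y k` has
law `⊗ⱼ νⱼ`, and integrating a feasibility constraint over the free coordinate gives `∫ p = 1`,
so every `g (Y k)` is centred. When `k` and `k'` differ in every coordinate, `Y k` and `Y k'` are
built from disjoint samples, hence independent, and the cross term vanishes. The remaining pairs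
share a coordinate; there are at most `m N^(2m-1)` of them and each contributes at most `M²`.
-/

open Finset

section EmpiricalMeasure

variable {E : Type*} [MeasurableSpace E] {N : ℕ}

lemma empMeas_apply (x : Fin N → E) {s : Set E} (hs : MeasurableSet s) :
    empMeas x s = (N : ℝ≥0∞)⁻¹ * ∑ a, s.indicator 1 (x a) := by
  simp [empMeas, Measure.dirac_apply' _ hs]

lemma isProbabilityMeasure_empMeas (hN : 0 < N) (x : Fin N → E) :
    IsProbabilityMeasure (empMeas x) :=
  ⟨by simpa [empMeas_apply x .univ] using
    ENNReal.inv_mul_cancel (Nat.cast_ne_zero.2 hN.ne') (ENNReal.natCast_ne_top N)⟩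

variable {ι : Type*} [Fintype ι] [DecidableEq ι]

lemma pi_empMeas (hN : 0 < N) (x : ι → Fin N → E) :
    Measure.pi (fun j => empMeas (x j)) =
      ((N : ℝ≥0∞) ^ Fintype.card ι)⁻¹ • ∑ k : ι → Fin N, Measure.dirac (fun j => x j (k j)) := by
  have := fun j => isProbabilityMeasure_empMeas hN (x j)
  refine Measure.pi_eq fun s hs => ?_
  simp only [empMeas_apply _ (hs _), prod_mul_distrib, prod_const, card_univ, ENNReal.inv_pow,
    Fintype.prod_sum, Measure.smul_apply, Measure.coe_finsetSum, Finset.sum_apply, smul_eq_mul,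
    Measure.dirac_apply' _ (MeasurableSet.univ_pi hs)]
  simp only [← coe_univ, Set.indicator_pi_one_apply]

lemma integral_pi_empMeas (hN : 0 < N) (x : ι → Fin N → E) {g : (ι → E) → ℝ}
    (hg : StronglyMeasurable g) :
    ∫ y, g y ∂(Measure.pi (fun j => empMeas (x j))) =
      ((N : ℝ) ^ Fintype.card ι)⁻¹ * ∑ k : ι → Fin N, g (fun j => x j (k j)) := by
  rw [pi_empMeas hN, integral_smul_measure,
    integral_finsetSum_measure fun k _ => integrable_dirac' hg enorm_lt_top]
  simp [integral_dirac' _ _ hg, ENNReal.toReal_inv]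

end EmpiricalMeasure

section UpdateCoordinate

variable {ι : Type*} [Fintype ι] [DecidableEq ι] {E : ι → Type*} [∀ i, MeasurableSpace (E i)]
  (ν : ∀ i, Measure (E i)) [∀ i, SigmaFinite (ν i)] (j : ι) [IsProbabilityMeasure (ν j)]

lemma measurePreserving_update_prod_pi :
    MeasurePreserving (fun z : (∀ i, E i) × E j => Function.update z.1 j z.2)
      ((Measure.pi ν).prod (ν j)) (Measure.pi ν) := by
  refine ⟨measurable_update', (Measure.pi_eq fun s hs => ?_).symm⟩
  have hpre : (fun z : (∀ i, E i) × E j => Function.update z.1 j z.2) ⁻¹' Set.univ.pi s =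
      Set.univ.pi (Function.update s j Set.univ) ×ˢ s j := by
    ext ⟨y, t⟩
    simp only [Set.mem_preimage, Set.mem_univ_pi, Set.mem_prod, Function.forall_update_iff]
    refine ⟨fun ⟨ht, hy⟩ => ⟨fun i => ?_, ht⟩, fun ⟨hy, ht⟩ => ⟨ht, fun i hi => ?_⟩⟩
    · rcases eq_or_ne i j with rfl | hi <;> simp [*]
    · simpa [hi] using hy i
  rw [Measure.map_apply measurable_update' (.univ_pi hs), hpre, Measure.prod_prod,
    Measure.pi_pi]
  simp only [Function.apply_update (fun i => ν i), Finset.prod_update_of_mem (mem_univ j),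
    measure_univ, one_mul]
  exact (prod_eq_prod_sdiff_singleton_mul (mem_univ j) _).symm

variable {G : Type*} [NormedAddCommGroup G] [NormedSpace ℝ G]

lemma integral_integral_update_pi {f : (∀ i, E i) → G} (hf : Integrable f (Measure.pi ν)) :
    ∫ t, ∫ y, f (Function.update y j t) ∂Measure.pi ν ∂ν j = ∫ y, f y ∂Measure.pi ν := by
  have hφ := measurePreserving_update_prod_pi ν j
  rw [← integral_prod_symm (fun z => f (Function.update z.1 j z.2))
    (hφ.integrable_comp_of_integrable hf), ← integral_map hφ.measurable.aemeasurable
    (hφ.map_eq.symm ▸ hf.1), hφ.map_eq]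

end UpdateCoordinate

section IndependentArray

variable {Ω K E : Type*} [MeasurableSpace Ω] [MeasurableSpace E] {μ : Measure Ω}
  {f : K → Ω → E}

lemma ProbabilityTheory.iIndepFun.indepFun_of_disjoint_range {ι ι' : Type*} [Fintype ι] [Fintype ι']
    [DecidableEq K] (hf : iIndepFun f μ) (hfm : ∀ i, Measurable (f i)) {a : ι → K} {b : ι' → K}
    (hab : Disjoint (Set.range a) (Set.range b)) :
    IndepFun (fun ω i => f (a i) ω) (fun ω i => f (b i) ω) μ := by
  have hST : Disjoint (univ.image a) (univ.image b) := by
    simpa [← disjoint_coe] using hab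
  have hS : ∀ i, a i ∈ univ.image a := fun i => mem_image_of_mem a (mem_univ i)
  have hT : ∀ i, b i ∈ univ.image b := fun i => mem_image_of_mem b (mem_univ i)
  exact (hf.indepFun_finset _ _ hST hfm).comp
    (φ := fun v i => v ⟨a i, hS i⟩) (ψ := fun v i => v ⟨b i, hT i⟩)
    (measurable_pi_lambda _ fun i => measurable_pi_apply _)
    (measurable_pi_lambda _ fun i => measurable_pi_apply _)

variable {ι κ : Type*} {X : ι → κ → Ω → E}

def selectTuple (X : ι → κ → Ω → E) (k : ι → κ) (ω : Ω) : ι → E :=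
  fun j => X j (k j) ω

lemma measurable_selectTuple (hX : ∀ j a, Measurable (X j a)) (k : ι → κ) :
    Measurable (selectTuple X k) :=
  measurable_pi_lambda _ fun j => hX j (k j)

lemma map_selectTuple [Fintype ι] [IsProbabilityMeasure μ] {ν : ι → Measure E}
    (hX : ∀ j a, Measurable (X j a)) (hind : iIndepFun (fun p : ι × κ => X p.1 p.2) μ)
    (hlaw : ∀ j a, μ.map (X j a) = ν j) (k : ι → κ) :
    μ.map (selectTuple X k) = Measure.pi ν := by
  have hk : iIndepFun (fun j => X j (k j)) μ :=
    hind.precomp (g := fun j => (j, k j)) fun _ _ h => congrArg Prod.fst h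
  change μ.map (fun ω j => X j (k j) ω) = _
  rw [(iIndepFun_iff_map_fun_eq_pi_map fun j => (hX j (k j)).aemeasurable).1 hk]
  simp only [hlaw]

lemma indepFun_selectTuple [Fintype ι] [DecidableEq ι] [DecidableEq κ]
    (hX : ∀ j a, Measurable (X j a)) (hind : iIndepFun (fun p : ι × κ => X p.1 p.2) μ)
    {k k' : ι → κ} (hkk' : ∀ j, k j ≠ k' j) :
    IndepFun (selectTuple X k) (selectTuple X k') μ :=
  hind.indepFun_of_disjoint_range (fun p => hX p.1 p.2) (a := fun j => (j, k j))
    (b := fun j => (j, k' j)) <| Set.disjoint_range_iff.2 fun j _ h => by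
      obtain ⟨rfl, h⟩ := Prod.ext_iff.1 h
      exact hkk' j h

end IndependentArray

section DependencyVariance

variable {Ω K : Type*} [MeasurableSpace Ω] {μ : Measure Ω} [IsProbabilityMeasure μ] [Fintype K]
  {Z : K → Ω → ℝ} {M : ℝ}

lemma integral_sq_sum_le_of_indepFun (hZ : ∀ k, AEStronglyMeasurable (Z k) μ)
    (hbound : ∀ k, ∀ᵐ ω ∂μ, |Z k ω| ≤ M) (hmean : ∀ k, ∫ ω, Z k ω ∂μ = 0)
    (R : K → K → Prop) [DecidableRel R] (hindep : ∀ k k', ¬ R k k' → IndepFun (Z k) (Z k') μ) :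
    ∫ ω, (∑ k, Z k ω) ^ 2 ∂μ ≤ M ^ 2 * #{p : K × K | R p.1 p.2} := by
  have hprod_bound : ∀ k k', ∀ᵐ ω ∂μ, |Z k ω * Z k' ω| ≤ M ^ 2 := fun k k' => by
    filter_upwards [hbound k, hbound k'] with ω h h'
    rw [abs_mul, sq]
    exact mul_le_mul h h' (abs_nonneg _) ((abs_nonneg _).trans h)
  have hint : ∀ k k', Integrable (fun ω => Z k ω * Z k' ω) μ := fun k k' =>
    .of_bound ((hZ k).mul (hZ k')) _ (hprod_bound k k')
  have hterm : ∀ k k', ∫ ω, Z k ω * Z k' ω ∂μ ≤ if R k k' then M ^ 2 else 0 := by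
    intro k k'
    split_ifs with h
    · calc ∫ ω, Z k ω * Z k' ω ∂μ ≤ ∫ _, M ^ 2 ∂μ :=
            integral_mono_ae (hint k k') (integrable_const _)
              ((hprod_bound k k').mono fun ω hω => (le_abs_self _).trans hω)
        _ = M ^ 2 := by simp
    · rw [(hindep k k' h).integral_fun_mul_eq_mul_integral (hZ k) (hZ k'), hmean k, zero_mul]
  calc ∫ ω, (∑ k, Z k ω) ^ 2 ∂μ = ∑ k, ∑ k', ∫ ω, Z k ω * Z k' ω ∂μ := by
        simp_rw [sq, sum_mul_sum]
        rw [integral_finsetSum _ fun k _ => integrable_finsetSum _ fun k' _ => hint k k']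
        exact sum_congr rfl fun k _ => integral_finsetSum _ fun k' _ => hint k k'
    _ ≤ ∑ k, ∑ k', if R k k' then M ^ 2 else 0 :=
        sum_le_sum fun k _ => sum_le_sum fun k' _ => hterm k k'
    _ = M ^ 2 * #{p : K × K | R p.1 p.2} := by
        rw [← Fintype.sum_prod_type', sum_ite, sum_const_zero, add_zero, sum_const, nsmul_eq_mul,
          mul_comm]

end DependencyVariance

open Fintype in
lemma card_filter_exists_apply_eq_le {ι κ : Type*} [Fintype ι] [DecidableEq ι] [Fintype κ]
    [DecidableEq κ] :
    #{p : (ι → κ) × (ι → κ) | ∃ j, p.1 j = p.2 j} ≤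
      card ι * (card κ ^ card ι * card κ ^ (card ι - 1)) := by
  have hcount : ∀ j, #{p : (ι → κ) × (ι → κ) | p.1 j = p.2 j} =
      card κ ^ card ι * card κ ^ (card ι - 1) := fun j => by
    have hfiber : ∀ a : κ, #{k : ι → κ | a = k j} = card κ ^ (card ι - 1) := fun a => by
      simpa [eq_comm] using Fintype.card_filter_piFinset_const_eq_of_mem univ j (mem_univ a)
    rw [card_filter, Fintype.sum_prod_type]
    simp only [← card_filter, hfiber, sum_const, card_univ, Fintype.card_fun, smul_eq_mul]
  calc #{p : (ι → κ) × (ι → κ) | ∃ j, p.1 j = p.2 j}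
      = #(univ.biUnion fun j => {p : (ι → κ) × (ι → κ) | p.1 j = p.2 j}) := by
        congr 1; ext; simp
    _ ≤ ∑ j, #{p : (ι → κ) × (ι → κ) | p.1 j = p.2 j} := card_biUnion_le
    _ = _ := by simp [hcount]

theorem integral_sq_integral_pi_empMeas_le {ι E Ω : Type*} [Fintype ι] [DecidableEq ι]
    [MeasurableSpace E] [MeasurableSpace Ω] {μ : Measure Ω} [IsProbabilityMeasure μ]
    {ν : ι → Measure E} {N : ℕ} (hN : 0 < N) {X : ι → Fin N → Ω → E}
    (hX : ∀ j a, Measurable (X j a)) (hind : iIndepFun (fun p : ι × Fin N => X p.1 p.2) μ)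
    (hlaw : ∀ j a, μ.map (X j a) = ν j) {g : (ι → E) → ℝ} (hg : Measurable g) {M : ℝ}
    (hbound : ∀ᵐ x ∂Measure.pi ν, |g x| ≤ M) (hmean : ∫ x, g x ∂Measure.pi ν = 0) :
    ∫ ω, (∫ x, g x ∂Measure.pi (fun j => empMeas (fun a => X j a ω))) ^ 2 ∂μ ≤
      M ^ 2 * Fintype.card ι / N := by
  set n := Fintype.card ι
  have hlawY := map_selectTuple hX hind hlaw
  have hvar := integral_sq_sum_le_of_indepFun (Z := fun k ω => g (selectTuple X k ω)) (M := M)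
    (fun k => (hg.comp (measurable_selectTuple hX k)).aestronglyMeasurable)
    (fun k => ae_of_ae_map (measurable_selectTuple hX k).aemeasurable (hlawY k ▸ hbound))
    (fun k => by
      rw [← integral_map (measurable_selectTuple hX k).aemeasurable hg.aestronglyMeasurable,
        hlawY k, hmean])
    (fun k k' => ∃ j, k j = k' j)
    fun k k' h => (indepFun_selectTuple hX hind (by simpa using h)).comp hg hg
  have hcount := card_filter_exists_apply_eq_le (ι := ι) (κ := Fin N)
  rw [Fintype.card_fin] at hcount
  calc ∫ ω, (∫ x, g x ∂Measure.pi (fun j => empMeas (fun a => X j a ω))) ^ 2 ∂μ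
      = ((N : ℝ) ^ n)⁻¹ ^ 2 * ∫ ω, (∑ k, g (selectTuple X k ω)) ^ 2 ∂μ := by
        simp_rw [integral_pi_empMeas hN _ hg.stronglyMeasurable, mul_pow]
        exact integral_const_mul _ _
    _ ≤ ((N : ℝ) ^ n)⁻¹ ^ 2 * (M ^ 2 * (n * (N ^ n * N ^ (n - 1)))) := by
        gcongr
        exact hvar.trans (mul_le_mul_of_nonneg_left (by exact_mod_cast hcount) (sq_nonneg M))
    _ = M ^ 2 * n / N := by
        rcases n with _ | n
        · simp
        · rw [Nat.add_sub_cancel]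
          field_simp
          ring

theorem empirical_mass_defect_variance_general {d m : ℕ} (hm : 0 < m)
    (ν : Fin m → Measure (Euc d)) (hν : ∀ j, IsProbabilityMeasure (ν j))
    (Ω : Type) [MeasurableSpace Ω] (μ : Measure Ω) (hμ : IsProbabilityMeasure μ)
    (N : ℕ) (hN : 0 < N)
    (X : Fin m → Fin N → Ω → Euc d)
    (hXm : ∀ j k, Measurable (X j k))
    (hXlaw : ∀ j k, μ.map (X j k) = ν j)
    (hXindep : iIndepFun
      (fun (p : Fin m × Fin N) ω => X p.1 p.2 ω) μ)
    (p : (Fin m → Euc d) → ℝ) (hpm : Measurable p)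
    (M : ℝ)
    (hpb : ∀ᵐ x ∂(Measure.pi ν), |1 - p x| ≤ M)
    (hfeas : ∀ j : Fin m, ∀ᵐ t ∂(ν j),
      ∫ y, p (Function.update y j t) ∂(Measure.pi ν) = 1) :
    ∫ ω, (∫ x, (1 - p x) ∂(Measure.pi (fun j => empMeas (fun k => X j k ω)))) ^ 2 ∂μ ≤
      M ^ 2 * m / N := by
  have hp_int : Integrable p (Measure.pi ν) :=
    .of_bound hpm.aestronglyMeasurable (1 + M) <| hpb.mono fun x hx => by
      rw [Real.norm_eq_abs]
      linarith [abs_sub_abs_le_abs_sub (p x) 1, abs_sub_comm (p x) 1, abs_one (α := ℝ)]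
  have hmean : ∫ x, 1 - p x ∂Measure.pi ν = 0 := by
    rw [integral_sub (integrable_const 1) hp_int,
      ← integral_integral_update_pi ν ⟨0, hm⟩ hp_int, integral_congr_ae (hfeas _)]
    simp
  simpa using integral_sq_integral_pi_empMeas_le hN hXm hXindep hXlaw
    (measurable_const.sub hpm) hpb hmean

/-- **Variance bound for the empirical mass defect of a feasible Gibbs density.**
If `|1 − p| ≤ M` a.e. and `p` satisfies the marginal feasibility constraints
`∫ p d(⊗_{i≠j} ν i) = 1` (ν j-a.e. in the frozen coordinate, expressed below via
`Function.update` and the full product measure), then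
`E[(∫ (1 − p) d(ν̂₁^N ⊗ ⋯ ⊗ ν̂_m^N))²] ≤ M² m / N`. -/
theorem empirical_mass_defect_variance {d m : ℕ} (hm : 0 < m)
    (𝒳 : Set (Euc d)) (h𝒳c : IsCompact 𝒳) (h𝒳b : ∀ x ∈ 𝒳, ∀ i, |x i| ≤ 1)
    (h𝒳int : (interior 𝒳).Nonempty)
    (ν : Fin m → Measure (Euc d)) (hν : ∀ j, IsProbabilityMeasure (ν j))
    (hνsupp : ∀ j, ν j 𝒳 = 1)
    (Ω : Type) [MeasurableSpace Ω] (μ : Measure Ω) (hμ : IsProbabilityMeasure μ)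
    (N : ℕ) (hN : 0 < N)
    (X : Fin m → Fin N → Ω → Euc d)
    (hXm : ∀ j k, Measurable (X j k))
    (hXlaw : ∀ j k, μ.map (X j k) = ν j)
    (hXindep : iIndepFun
      (fun (p : Fin m × Fin N) ω => X p.1 p.2 ω) μ)
    (p : (Fin m → Euc d) → ℝ) (hpm : Measurable p)
    (M : ℝ) (hM : 0 < M)
    (hpb : ∀ᵐ x ∂(Measure.pi ν), |1 - p x| ≤ M)
    (hfeas : ∀ j : Fin m, ∀ᵐ t ∂(ν j),
      ∫ y, p (Function.update y j t) ∂(Measure.pi ν) = 1) :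
    ∫ ω, (∫ x, (1 - p x) ∂(Measure.pi (fun j => empMeas (fun k => X j k ω)))) ^ 2 ∂μ ≤
      M ^ 2 * m / N :=
  empirical_mass_defect_variance_general hm ν hν Ω μ hμ N hN X hXm hXlaw hXindep p hpm M hpb hfeas
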